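/- Let $F$ be a field, let $D \ge 1$ and $b \ge 0$ be integers, and for each $k = 1, \ldots, D$ let $B^{(k)}$ be an invertible lower triangular $(b+1) \times (b+1)$ matrix over $F$ (indices running from $1$ to $b+1$). Let $f$ be an $F$-valued function on the sparse grid index set $\{\mathbf{a} \in \{1, \ldots, b+1\}^D : \sum_{k=1}^D (a_k - 1) \le b\}$. For each multi-index $\mathbf{i}$ with $\sum_{k=1}^D (i_k - 1) \le b$, define $C_{\mathbf{i}} = \sum_{\mathbf{a} : a_k \le i_k \,\forall k} \prod_{k=1}^D \big[(B^{(k)})^{-1}\big]_{i_k, a_k} \, f(\mathbf{a})$. Then for every $\mathbf{a}$ with $\sum_{k=1}^D (a_k - 1) \le b$ one has $\sum_{\mathbf{i} : \sum_k (i_k - 1) \le b} C_{\mathbf{i}} \prod_{k=1}^D B^{(k)}_{a_k, i_k} = f(\mathbf{a})$. -/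

import Mathlib

/-!
The sparse-grid interpolation matrix is the Kronecker product `L` of the one-dimensional matrices,
restricted to the sparse index set `s`. Lower triangularity of each factor makes `L` and the
Kronecker product `M` of the inverses triangular for the componentwise order, and `s` is a lower
set for that order. Hence the restricted sums defining `C` are the full products `M *ᵥ f`, the
restricted sum over `s` is the full product with `L`, and `L * M = 1` returns `f`.
-/

open Finset

namespace Matrix

variable {R : Type*} [CommSemiring R]

theorem sum_mul_eq_of_triangular_of_isLowerSet {ι : Type*} [Fintype ι] [Preorder ι]
    [DecidableEq ι] [DecidableLE ι] (L M : Matrix ι ι R) (hL : ∀ a i, ¬ i ≤ a → L a i = 0)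
    (hM : ∀ a i, ¬ i ≤ a → M a i = 0) (hLM : L * M = 1) (s : Finset ι)
    (hs : IsLowerSet (s : Set ι)) (f C : ι → R)
    (hC : ∀ i ∈ s, C i = ∑ x ∈ univ.filter (· ≤ i), M i x * f x) {a : ι} (ha : a ∈ s) :
    ∑ i ∈ s, C i * L a i = f a := by
  have hC' : ∀ i ∈ s, C i = (M *ᵥ f) i := fun i hi => by
    rw [hC i hi, mulVec, dotProduct]
    exact sum_filter_of_ne fun x _ hx => by_contra fun hxi => hx (by rw [hM i x hxi, zero_mul])
  calc ∑ i ∈ s, C i * L a i = ∑ i ∈ s, L a i * (M *ᵥ f) i :=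
        sum_congr rfl fun i hi => by rw [hC' i hi, mul_comm]
    _ = ∑ i, L a i * (M *ᵥ f) i :=
        sum_subset (subset_univ s) fun i _ hi => by
          rw [hL a i fun hia => hi (hs hia ha), zero_mul]
    _ = f a := by rw [← dotProduct, ← mulVec, mulVec_mulVec, hLM, one_mulVec]

variable {ι n : Type*} [Fintype ι]

def piKronecker (B : ι → Matrix n n R) : Matrix (ι → n) (ι → n) R :=
  of fun a i => ∏ k, B k (a k) (i k)

theorem piKronecker_mul [DecidableEq ι] [Fintype n] (A B : ι → Matrix n n R) :
    piKronecker A * piKronecker B = piKronecker (A * B) := by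
  ext a c
  simp only [piKronecker, mul_apply, of_apply, Pi.mul_apply, Fintype.prod_sum, prod_mul_distrib]

theorem piKronecker_one [DecidableEq n] : piKronecker (fun _ : ι => (1 : Matrix n n R)) = 1 := by
  ext a c
  simp only [piKronecker, of_apply, one_apply, Fintype.prod_boole, funext_iff]

theorem piKronecker_apply_eq_zero_of_not_le [LinearOrder n] {B : ι → Matrix n n R}
    (hB : ∀ k, BlockTriangular (B k) OrderDual.toDual) {a i : ι → n} (hia : ¬ i ≤ a) :
    piKronecker B a i = 0 := by
  obtain ⟨k, hk⟩ := not_forall.mp hia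
  exact prod_eq_zero (mem_univ k) (hB k (not_le.mp hk))

end Matrix

theorem isLowerSet_setOf_sum_val_le {ι : Type*} [Fintype ι] (b : ℕ) (m : ℕ) :
    IsLowerSet {i : ι → Fin m | ∑ k, (i k).val ≤ b} :=
  fun _ _ hyx hx => (sum_le_sum fun k _ => Fin.val_fin_le.mpr (hyx k)).trans hx

open Matrix in
theorem sparse_grid_interpolation_general {F : Type*} [Field F] (D b : ℕ)
    (B : Fin D → Matrix (Fin (b + 1)) (Fin (b + 1)) F)
    (hinv : ∀ k, IsUnit (B k))
    (hlow : ∀ k, ∀ a i : Fin (b + 1), a < i → B k a i = 0)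
    (f : (Fin D → Fin (b + 1)) → F)
    (C : (Fin D → Fin (b + 1)) → F)
    (hC : ∀ i : Fin D → Fin (b + 1), (∑ k, ((i k : ℕ))) ≤ b →
      C i = ∑ a ∈ Finset.univ.filter (fun a : Fin D → Fin (b + 1) => ∀ k, a k ≤ i k),
        (∏ k, (B k)⁻¹ (i k) (a k)) * f a) :
    ∀ a : Fin D → Fin (b + 1), (∑ k, ((a k : ℕ))) ≤ b →
      (∑ i ∈ Finset.univ.filter (fun i : Fin D → Fin (b + 1) => (∑ k, ((i k : ℕ))) ≤ b),
        C i * ∏ k, B k (a k) (i k)) = f a := by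
  classical
  intro a ha
  have hBinv : ∀ k, BlockTriangular (B k)⁻¹ OrderDual.toDual := fun k =>
    have := (hinv k).invertible
    blockTriangular_inv_of_blockTriangular (hlow k)
  have hLM : piKronecker B * piKronecker (fun k => (B k)⁻¹) = 1 := by
    rw [piKronecker_mul, ← piKronecker_one]
    congr 1
    funext k
    exact mul_nonsing_inv _ ((isUnit_iff_isUnit_det _).mp (hinv k))
  refine sum_mul_eq_of_triangular_of_isLowerSet _ _
    (fun _ _ => piKronecker_apply_eq_zero_of_not_le hlow)
    (fun _ _ => piKronecker_apply_eq_zero_of_not_le hBinv) hLM _ ?_ f C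
    (fun i hi => (hC i (mem_filter.mp hi).2).trans ?_) (mem_filter.mpr ⟨mem_univ a, ha⟩)
  · simpa only [coe_filter, mem_univ, true_and] using isLowerSet_setOf_sum_val_le b (b + 1)
  · congr 1
    ext
    simp only [mem_filter, Pi.le_def]

/-- With invertible lower triangular 1-D matrices `B k` (ZAPPL basis
evaluation matrices), the coefficients `C i` computed by the restricted (sequential)
sums `a k ≤ i k` reproduce the function values `f a` at all sparse grid points
`∑ (a k - 1) ≤ b`.  Indices are 0-based: `(i k : ℕ)` plays the role of `i_k - 1`. -/
theorem sparse_grid_interpolation {F : Type*} [Field F] (D b : ℕ) (hD : 1 ≤ D)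
    (B : Fin D → Matrix (Fin (b + 1)) (Fin (b + 1)) F)
    (hinv : ∀ k, IsUnit (B k))
    (hlow : ∀ k, ∀ a i : Fin (b + 1), a < i → B k a i = 0)
    (f : (Fin D → Fin (b + 1)) → F)
    (C : (Fin D → Fin (b + 1)) → F)
    (hC : ∀ i : Fin D → Fin (b + 1), (∑ k, ((i k : ℕ))) ≤ b →
      C i = ∑ a ∈ Finset.univ.filter (fun a : Fin D → Fin (b + 1) => ∀ k, a k ≤ i k),
        (∏ k, (B k)⁻¹ (i k) (a k)) * f a) :
    ∀ a : Fin D → Fin (b + 1), (∑ k, ((a k : ℕ))) ≤ b →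
      (∑ i ∈ Finset.univ.filter (fun i : Fin D → Fin (b + 1) => (∑ k, ((i k : ℕ))) ≤ b),
        C i * ∏ k, B k (a k) (i k)) = f a :=
  sparse_grid_interpolation_general D b B hinv hlow f C hC
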